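/- arXiv:2211.02088 — 4 statements merged into one kernel-verified Lean document; each statement's English description precedes it below -/
import Mathlib

section
/- Let R be a differential field of meromorphic functions on a domain (closed under differentiation). If g is algebraic-transcendent with respect to R (i.e., satisfies a nontrivial polynomial differential equation with coefficients in R) and f is algebraic-transcendent with respect to the differential field R⟨g⟩ generated by adjoining g and all its derivatives to R, then f is algebraic-transcendent with respect to R. -/
/-!
Let `m` be minimal with `h, h', …, h^{(m)}` algebraically dependent over the differential field
`R`. Then `h^{(m)}` is algebraic over `R(h, …, h^{(m-1)})`; differentiating its minimal
polynomial, whose derivative does not vanish at `h^{(m)}` in characteristic zero, shows that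
`R(h, …, h^{(m)})` is closed under `δ` and hence contains every derivative of `h`. Applied to
`g`, this puts `R⟨g⟩` inside a differential field `E` finitely generated over `R`; applied to
`f` over `E`, it puts all derivatives of `f` into a field generated over `R` by finitely many
elements, say `n` of them. A field generated by `n` elements has transcendence degree at most
`n` (the exchange property of the algebraic matroid), so `f, …, f^{(n)}` are algebraically
dependent over `R`.
-/

/-- `h` is algebraic-transcendent with respect to the subfield `R` of the differential
field `(K, δ)`: it satisfies a nontrivial polynomial differential equation with
coefficients in `R`. -/
def AlgTransOver {K : Type*} [Field K] (δ : K → K) (R : Subfield K) (h : K) : Prop :=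
  ∃ (m : ℕ) (P : MvPolynomial (Fin (m + 1)) ↥R), P ≠ 0 ∧
    MvPolynomial.aeval (fun j : Fin (m + 1) => δ^[(j : ℕ)] h) P = 0

open Set Polynomial

section

variable {K : Type*} [Field K]

theorem algebraicIndepOn_Iic_iff {R A : Type*} [CommRing R] [CommRing A] [Algebra R A]
    (x : ℕ → A) (m : ℕ) :
    AlgebraicIndepOn R x (Iic m) ↔ AlgebraicIndependent R fun j : Fin (m + 1) => x j :=
  (algebraicIndependent_equiv'
    (Fin.equivSubtype.trans (Equiv.subtypeEquivRight fun _ => Nat.lt_succ_iff)) rfl).symm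

theorem algTransOver_iff {δ : K → K} {R : Subfield K} {h : K} :
    AlgTransOver δ R h ↔ ∃ m, ¬ AlgebraicIndepOn R (fun j => δ^[j] h) (Iic m) := by
  simp only [algebraicIndepOn_Iic_iff (fun j => δ^[j] h), algebraicIndependent_iff, not_forall,
    exists_prop]
  exact exists_congr fun m => exists_congr fun P => and_comm

theorem AlgTransOver.mono {δ : K → K} {S E : Subfield K} (hSE : S ≤ E) {h : K}
    (hh : AlgTransOver δ S h) : AlgTransOver δ E h := by
  let : Algebra S E := (Subfield.inclusion hSE).toAlgebra
  have : IsScalarTower S E K := .of_algebraMap_eq fun _ => rfl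
  obtain ⟨m, hm⟩ := algTransOver_iff.1 hh
  exact algTransOver_iff.2
    ⟨m, fun hind => hm (hind.restrictScalars (Subfield.inclusion hSE).injective)⟩

theorem AlgTransOver.exists_isAlgebraic_iterate {δ : K → K} {R : Subfield K} {h : K}
    (hh : AlgTransOver δ R h) :
    ∃ m, IsAlgebraic (Algebra.adjoin R ((fun j => δ^[j] h) '' Iio m)) (δ^[m] h) := by
  obtain ⟨M, hM⟩ := algTransOver_iff.1 hh
  obtain ⟨m, hind, hdep⟩ := Nat.exists_not_and_succ_of_not_zero_of_exists
    (p := fun n => ¬ AlgebraicIndepOn R (fun j => δ^[j] h) (Iio n))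
    (by simpa [AlgebraicIndepOn] using (algebraMap R K).injective)
    ⟨M + 1, fun hI => hM (hI.mono (Iic_subset_Iio.2 (Nat.lt_succ_self M)))⟩
  rw [show Iio (m + 1) = insert m (Iio m) from Order.Iio_succ_eq_insert m,
    AlgebraicIndepOn.insert_iff self_notMem_Iio] at hdep
  exact ⟨m, not_not.1 fun htr => hdep ⟨not_not.1 hind, htr⟩⟩

theorem isAlgebraic_closure_of_isAlgebraic_adjoin {R : Subfield K} {S : Set K} {u : K}
    (hu : IsAlgebraic (Algebra.adjoin R S) u) :
    IsAlgebraic (Subfield.closure ((R : Set K) ∪ S)) u := by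
  set A := Algebra.adjoin R S
  set F := Subfield.closure ((R : Set K) ∪ S)
  have hAF :
      A ≤ (F.toIntermediateField fun r => Subfield.subset_closure (Or.inl r.2)).toSubalgebra :=
    Algebra.adjoin_le fun s hs => Subfield.subset_closure (Or.inr hs)
  let : Algebra A F := (Subring.inclusion (S := A.toSubring) (T := F.toSubring) hAF).toAlgebra
  have : IsScalarTower A F K := .of_algebraMap_eq fun _ => rfl
  exact hu.extendScalars (Subring.inclusion_injective _)

theorem isAlgebraic_adjoin_of_mem_closure {R : Subfield K} {T : Set K} {x : K}
    (hx : x ∈ Subfield.closure ((R : Set K) ∪ T)) : IsAlgebraic (Algebra.adjoin R T) x := by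
  induction hx using Subfield.closure_induction with
  | mem x hx =>
    refine isAlgebraic_algebraMap (⟨x, ?_⟩ : Algebra.adjoin R T)
    rcases hx with hx | hx
    · exact Subalgebra.algebraMap_mem _ (⟨x, hx⟩ : R)
    · exact Algebra.subset_adjoin hx
  | one => exact isAlgebraic_one
  | add x y _ _ hx hy => exact hx.add hy
  | neg x _ hx => exact hx.neg
  | inv x _ hx => exact hx.inv
  | mul x y _ _ hx hy => exact hx.mul hy

theorem AlgebraicIndepOn.encard_le_of_mem_closure {R : Subfield K} {ι : Type*} {x : ι → K}
    {s : Set ι} {T : Set K} (hx : AlgebraicIndepOn R x s)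
    (hxT : ∀ i ∈ s, x i ∈ Subfield.closure ((R : Set K) ∪ T)) : s.encard ≤ T.encard := by
  let M := AlgebraicIndependent.matroid R K
  have hind : M.Indep (x '' s) := AlgebraicIndependent.image hx
  have hsub : x '' s ⊆ M.closure T := by
    rw [AlgebraicIndependent.matroid_closure_eq]
    rintro _ ⟨i, hi, rfl⟩
    exact isAlgebraic_adjoin_of_mem_closure (hxT i hi)
  calc s.encard = (x '' s).encard := (injOn_iff_injective.2 hx.injective).encard_image.symm
    _ ≤ M.eRk (M.closure T) := hind.encard_le_eRk_of_subset hsub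
    _ = M.eRk T := M.eRk_closure_eq T
    _ ≤ T.encard := M.eRk_le_encard T

theorem algTransOver_of_forall_mem_closure {δ : K → K} {R : Subfield K} {T : Set K}
    (hT : T.Finite) {h : K} (hmem : ∀ j, δ^[j] h ∈ Subfield.closure ((R : Set K) ∪ T)) :
    AlgTransOver δ R h := by
  refine algTransOver_iff.2 ⟨T.ncard, fun hind => ?_⟩
  have hcard := hind.encard_le_of_mem_closure fun j _ => hmem j
  rw [← hT.cast_ncard_eq, encard_eq_coe_toFinset_card] at hcard
  simp only [toFinset_Iic, Nat.card_Iic, Nat.cast_add, Nat.cast_one] at hcard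
  exact (ENat.natCast_add_one_le_iff.1 hcard).false

theorem Derivation.exists_coe_eq {A : Type*} [CommRing A] {δ : A → A}
    (hadd : ∀ x y : A, δ (x + y) = δ x + δ y)
    (hmul : ∀ x y : A, δ (x * y) = x * δ y + δ x * y) :
    ∃ D : Derivation ℤ A A, ⇑D = δ :=
  ⟨Derivation.mk' (AddMonoidHom.mk' δ hadd).toIntLinearMap fun a b => by
    simp [hmul, smul_eq_mul, mul_comm], rfl⟩

namespace Derivation

variable (D : Derivation ℤ K K)

theorem apply_mem_of_mem_closure {E : Subfield K} {s : Set K} (hsE : s ⊆ E)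
    (hDs : ∀ x ∈ s, D x ∈ E) {x : K} (hx : x ∈ Subfield.closure s) : D x ∈ E := by
  suffices x ∈ E ∧ D x ∈ E from this.2
  induction hx using Subfield.closure_induction with
  | mem x hx => exact ⟨hsE hx, hDs x hx⟩
  | one => simp
  | add x y _ _ hx hy => exact ⟨add_mem hx.1 hy.1, by simpa using add_mem hx.2 hy.2⟩
  | neg x _ hx => exact ⟨neg_mem hx.1, by simpa using neg_mem hx.2⟩
  | inv x _ hx =>
    refine ⟨inv_mem hx.1, ?_⟩
    rw [leibniz_inv, smul_eq_mul]
    exact mul_mem (neg_mem (pow_mem (inv_mem hx.1) 2)) hx.2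
  | mul x y _ _ hx hy =>
    refine ⟨mul_mem hx.1 hy.1, ?_⟩
    rw [leibniz, smul_eq_mul, smul_eq_mul]
    exact add_mem (mul_mem hx.1 hy.2) (mul_mem hy.1 hx.2)

theorem apply_eval_sub_mem {F E : Subfield K} (hDF : ∀ a ∈ F, D a ∈ E) {p : K[X]}
    (hp : ∀ i, p.coeff i ∈ F) {u : K} (hu : u ∈ E) :
    D (p.eval u) - (derivative p).eval u * D u ∈ E := by
  rw [apply_eval_eq, smul_eq_mul, add_sub_cancel_right, PolynomialModule.eval_apply]
  exact sum_mem fun i _ => mul_mem (pow_mem hu i) (hDF _ (hp i))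

theorem apply_mem_of_isAlgebraic [CharZero K] {F E : Subfield K} (hFE : F ≤ E)
    (hDF : ∀ a ∈ F, D a ∈ E) {u : K} (hu : u ∈ E) (halg : IsAlgebraic F u) : D u ∈ E := by
  have hcoeff (q : F[X]) (i : ℕ) : (q.map (algebraMap F K)).coeff i ∈ F := by
    rw [coeff_map]; exact (q.coeff i).2
  set p := (minpoly F u).map (algebraMap F K)
  have hroot : p.eval u = 0 := by rw [eval_map, ← aeval_def, minpoly.aeval]
  have hsep : (derivative p).eval u ≠ 0 := by
    rw [derivative_map, eval_map, ← aeval_def]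
    exact (minpoly.irreducible halg.isIntegral).separable.aeval_derivative_ne_zero
      (minpoly.aeval F u)
  have hp' : (derivative p).eval u ∈ E := by
    rw [derivative_map, eval_eq_sum_range]
    exact sum_mem fun i _ => mul_mem (hFE (hcoeff _ i)) (pow_mem hu i)
  have hrel := D.apply_eval_sub_mem (p := p) hDF (hcoeff _) hu
  rw [hroot, map_zero, zero_sub, neg_mem_iff] at hrel
  simpa only [inv_mul_cancel_left₀ hsep] using mul_mem (inv_mem hp') hrel

end Derivation

theorem AlgTransOver.exists_finite_stable_closure [CharZero K] {D : Derivation ℤ K K}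
    {R : Subfield K} (hR : ∀ x ∈ R, D x ∈ R) {h : K} (hh : AlgTransOver D R h) :
    ∃ T : Set K, T.Finite ∧
      (∀ y ∈ Subfield.closure ((R : Set K) ∪ T),
        D y ∈ Subfield.closure ((R : Set K) ∪ T)) ∧
      ∀ j, D^[j] h ∈ Subfield.closure ((R : Set K) ∪ T) := by
  set x : ℕ → K := fun j => D^[j] h
  obtain ⟨m, halg⟩ := hh.exists_isAlgebraic_iterate
  set E := Subfield.closure ((R : Set K) ∪ x '' Iic m)
  have hRE : (R : Set K) ⊆ E := fun y hy => Subfield.subset_closure (Or.inl hy)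
  have hxE : ∀ j ≤ m, x j ∈ E := fun j hj => Subfield.subset_closure (Or.inr ⟨j, hj, rfl⟩)
  have hsucc : ∀ j < m, D (x j) ∈ E := fun j hj => by
    simpa only [x, ← Function.iterate_succ_apply' D] using hxE (j + 1) hj
  have hF : ∀ y ∈ Subfield.closure ((R : Set K) ∪ x '' Iio m), D y ∈ E := by
    refine fun y => D.apply_mem_of_mem_closure
      (union_subset hRE (image_subset_iff.2 fun j hj => hxE j (le_of_lt hj))) ?_
    rintro _ (hy | ⟨j, hj, rfl⟩)
    · exact hRE (hR _ hy)
    · exact hsucc j hj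
  have hlast : D (x m) ∈ E :=
    D.apply_mem_of_isAlgebraic (Subfield.closure_mono (union_subset_union_right _
      (image_mono Iio_subset_Iic_self))) hF (hxE m le_rfl)
      (isAlgebraic_closure_of_isAlgebraic_adjoin halg)
  have hE : ∀ y ∈ E, D y ∈ E := by
    refine fun y => D.apply_mem_of_mem_closure Subfield.subset_closure ?_
    rintro _ (hy | ⟨j, hj, rfl⟩)
    · exact hRE (hR _ hy)
    · rcases (mem_Iic.1 hj).lt_or_eq with hj | rfl
      · exact hsucc j hj
      · exact hlast
  refine ⟨x '' Iic m, (finite_Iic m).image x, hE, fun j => ?_⟩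
  induction j with
  | zero => exact hxE 0 (Nat.zero_le m)
  | succ j ih => rw [Function.iterate_succ_apply']; exact hE _ ih

end

/-- Tower property of algebraic-transcendence (§5): in a differential field `(K, δ)` of
characteristic zero, if `g` is algebraic-transcendent over a differentially closed
subfield `R` and `f` is algebraic-transcendent over the differential subfield `R⟨g⟩`
generated by adjoining `g` and all its derivatives, then `f` is algebraic-transcendent
over `R`. -/
theorem stmt_13 (K : Type*) [Field K] [CharZero K] (δ : K → K)
    (hadd : ∀ x y : K, δ (x + y) = δ x + δ y)
    (hmul : ∀ x y : K, δ (x * y) = x * δ y + δ x * y)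
    (R : Subfield K) (hR : ∀ x ∈ R, δ x ∈ R)
    (g f : K)
    (hg : AlgTransOver δ R g)
    (hf : AlgTransOver δ
      (Subfield.closure ((R : Set K) ∪ Set.range fun j : ℕ => δ^[j] g)) f) :
    AlgTransOver δ R f := by
  obtain ⟨D, rfl⟩ := Derivation.exists_coe_eq hadd hmul
  obtain ⟨Tg, hTg, hEg, hgEg⟩ := hg.exists_finite_stable_closure hR
  have hle : Subfield.closure ((R : Set K) ∪ range fun j => D^[j] g) ≤
      Subfield.closure ((R : Set K) ∪ Tg) :=
    Subfield.closure_le.2 (union_subset (fun y hy => Subfield.subset_closure (Or.inl hy))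
      (range_subset_iff.2 hgEg))
  obtain ⟨Tf, hTf, -, hfEf⟩ := (hf.mono hle).exists_finite_stable_closure hEg
  refine algTransOver_of_forall_mem_closure (hTg.union hTf) fun j => ?_
  simpa only [Subfield.closure_union, Subfield.closure_eq, sup_assoc] using hfEf j
end

section
/- Let τ₀, ..., τ_k be distinct real numbers and a₀, ..., a_k complex numbers not all zero. Then the function f(s) = a₀ e^{i τ₀ s} + ... + a_k e^{i τ_k s} does not tend to 0 as s → +∞ along the reals; in fact, for any real s₀ with f(s₀) ≠ 0 there is a sequence s_m → +∞ of reals with f(s_m) → f(s₀). -/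
/-!
Shifting the variable by `s₀` only changes the coefficients, so it suffices to return close to
the value at `0` along integers `n`. The vectors `(e^{i τⱼ n})ⱼ` are the powers of a single element
of the compact group `Circleᵏ⁺¹`, and in a compact group `1` is a cluster point of the powers of
any element. A point where the sum does not vanish exists by Dedekind's linear independence of
the distinct characters `s ↦ e^{i τⱼ s}` of `(ℝ, +)`; recurrence to that nonzero value rules out
the limit `0`.
-/

open Filter Topology Complex

noncomputable def trigSum {ι : Type*} [Fintype ι] (a : ι → ℂ) (τ : ι → ℝ) (s : ℝ) : ℂ :=
  ∑ j, a j * exp (I * τ j * s)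

section Recurrence

variable {ι : Type*} [Fintype ι] (a : ι → ℂ) (τ : ι → ℝ)

lemma trigSum_add (s t : ℝ) :
    trigSum a τ (s + t) = trigSum (fun j ↦ a j * exp (I * τ j * s)) τ t := by
  simp only [trigSum, ofReal_add, mul_add, exp_add, mul_assoc]

lemma trigSum_natCast (n : ℕ) :
    trigSum a τ n = ∑ j, a j * ((fun j ↦ Circle.exp (τ j)) ^ n) j := by
  simp only [trigSum, Pi.pow_apply, ← Circle.exp_nsmul, Circle.coe_exp, nsmul_eq_mul]
  exact Finset.sum_congr rfl fun j _ ↦ by push_cast; ring_nf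

lemma exists_strictMono_tendsto_trigSum_natCast :
    ∃ n : ℕ → ℕ, StrictMono n ∧
      Tendsto (fun m ↦ trigSum a τ (n m)) atTop (𝓝 (trigSum a τ 0)) := by
  obtain ⟨n, hn, hlim⟩ := (mapClusterPt_one_atTop_pow fun j ↦ Circle.exp (τ j)).tendsto_subseq
  have hF : Continuous fun u : ι → Circle ↦ ∑ j, a j * u j := by fun_prop
  have h0 : trigSum a τ 0 = ∑ j, a j := by simp [trigSum]
  refine ⟨n, hn, ?_⟩
  simp only [trigSum_natCast, h0]
  simpa only [Function.comp_def, Pi.one_apply, Circle.coe_one, mul_one] using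
    (hF.tendsto 1).comp hlim

lemma exists_tendsto_atTop_tendsto_trigSum (s₀ : ℝ) :
    ∃ s : ℕ → ℝ, Tendsto s atTop atTop ∧
      Tendsto (fun m ↦ trigSum a τ (s m)) atTop (𝓝 (trigSum a τ s₀)) := by
  obtain ⟨n, hn, hlim⟩ :=
    exists_strictMono_tendsto_trigSum_natCast (fun j ↦ a j * exp (I * τ j * s₀)) τ
  refine ⟨fun m ↦ s₀ + n m, tendsto_atTop_add_const_left _ _ ?_, ?_⟩
  · exact tendsto_natCast_atTop_atTop.comp hn.tendsto_atTop
  · rw [← add_zero s₀, trigSum_add, add_zero]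
    simpa only [trigSum_add] using hlim

end Recurrence

noncomputable def expMulICharacter (t : ℝ) : Multiplicative ℝ →* ℂ where
  toFun s := exp (I * t * s.toAdd)
  map_one' := by simp
  map_mul' x y := by simp only [toAdd_mul, ofReal_add, mul_add, exp_add]

lemma expMulICharacter_injective : Function.Injective expMulICharacter := by
  intro t t' h
  by_contra hne
  have hd : (t : ℂ) - t' ≠ 0 := sub_ne_zero.2 (mod_cast hne)
  -- at `s = π / (t - t')` the two characters differ by the factor `e^{iπ} = -1`
  have h_eq := congr($h (Multiplicative.ofAdd (Real.pi / (t - t'))))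
  simp only [expMulICharacter, MonoidHom.coe_mk, OneHom.coe_mk, toAdd_ofAdd] at h_eq
  have h_one : exp (I * (t - t') * ((Real.pi / (t - t') : ℝ) : ℂ)) = 1 := by
    rw [mul_sub, sub_mul, exp_sub, h_eq, div_self (exp_ne_zero _)]
  rw [show I * (t - t') * ((Real.pi / (t - t') : ℝ) : ℂ) = Real.pi * I by push_cast; field_simp,
    exp_pi_mul_I] at h_one
  norm_num at h_one

lemma exists_trigSum_ne_zero {ι : Type*} [Fintype ι] {a : ι → ℂ} {τ : ι → ℝ}
    (hτ : Function.Injective τ) (ha : a ≠ 0) : ∃ s, trigSum a τ s ≠ 0 := by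
  by_contra! h
  have hli : LinearIndependent ℂ fun j ↦ ⇑(expMulICharacter (τ j)) :=
    (linearIndependent_monoidHom (Multiplicative ℝ) ℂ).comp _ (expMulICharacter_injective.comp hτ)
  refine ha (funext <| Fintype.linearIndependent_iff.mp hli a <| funext fun s ↦ ?_)
  simpa [expMulICharacter, trigSum, mul_comm] using h s.toAdd

/-- A nontrivial trigonometric sum `f(s) = Σ aⱼ e^{i τⱼ s}` with distinct real
frequencies does not tend to `0` as `s → +∞` along the reals; moreover, for any real
`s₀` with `f(s₀) ≠ 0` there is a real sequence `s_m → +∞` with `f(s_m) → f(s₀)`. -/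
theorem stmt_17 (k : ℕ) (τ : Fin (k + 1) → ℝ) (hτ : Function.Injective τ)
    (a : Fin (k + 1) → ℂ) (ha : ∃ j, a j ≠ 0) :
    (¬ Tendsto (fun s : ℝ => ∑ j, a j * Complex.exp (Complex.I * (τ j : ℂ) * (s : ℂ)))
        atTop (nhds 0)) ∧
    ∀ s₀ : ℝ, (∑ j, a j * Complex.exp (Complex.I * (τ j : ℂ) * (s₀ : ℂ))) ≠ 0 →
      ∃ s : ℕ → ℝ, Tendsto s atTop atTop ∧
        Tendsto (fun m => ∑ j, a j * Complex.exp (Complex.I * (τ j : ℂ) * (s m : ℂ)))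
          atTop (nhds (∑ j, a j * Complex.exp (Complex.I * (τ j : ℂ) * (s₀ : ℂ)))) := by
  have recurrence := exists_tendsto_atTop_tendsto_trigSum a τ
  refine ⟨fun h_zero ↦ ?_, fun s₀ _ ↦ recurrence s₀⟩
  obtain ⟨s₀, hs₀⟩ := exists_trigSum_ne_zero hτ (Function.ne_iff.mpr ha)
  obtain ⟨s, hs, hlim⟩ := recurrence s₀
  exact hs₀ (tendsto_nhds_unique hlim (h_zero.comp hs))
end

section
/- Let n_i = σ_i + √(-1) τ_i be complex exponents with σ_i → +∞ and |τ_i/σ_i| bounded for large i, and suppose Σ |a_i| ν^{σ_i} e^{2π|τ_i|} converges for some ν > 0 ('absolute convergence in the sharp sense' at radius ν). Then the termwise derivative series Σ n_i a_i x^{n_i - 1} converges absolutely in the sharp sense at radius ν − ε for every 0 < ε < ν. -/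
/-!
Write `nᵢ = σᵢ + iτᵢ`. Since `|τᵢ| ≤ C σᵢ` eventually, `|nᵢ| ≤ (1 + C) σᵢ`, and with
`r = (ν - ε)/ν < 1` the ratio of the `i`-th terms of the two series is
`|nᵢ| (ν - ε)^{σᵢ - 1} / ν^{σᵢ} ≤ (1 + C)/(ν - ε) · σᵢ r^{σᵢ} → 0`, because the exponential
decay of `r^x` beats the linear growth of `x`. So the derivative series is eventually dominated
by the convergent series at radius `ν`.
-/

open Filter Real Topology

theorem tendsto_mul_rpow_atTop_nhds_zero {r : ℝ} (hr0 : 0 < r) (hr1 : r < 1) :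
    Tendsto (fun x : ℝ => x * r ^ x) atTop (𝓝 0) := by
  have hlog : 0 < -Real.log r := neg_pos.2 (Real.log_neg hr0 hr1)
  convert tendsto_rpow_mul_exp_neg_mul_atTop_nhds_zero 1 (-Real.log r) hlog using 2 with x
  rw [Real.rpow_one, neg_neg, Real.rpow_def_of_pos hr0, mul_comm x]

theorem eventually_mul_mul_rpow_sub_one_le_rpow {ι : Type*} {l : Filter ι} {σ : ι → ℝ}
    (hσ : Tendsto σ l atTop) (K : ℝ) {ρ ν : ℝ} (hρ : 0 < ρ) (hρν : ρ < ν) :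
    ∀ᶠ i in l, K * σ i * ρ ^ (σ i - 1) ≤ ν ^ (σ i) := by
  have hν : 0 < ν := hρ.trans hρν
  have hratio : Tendsto (fun i => K / ρ * (σ i * (ρ / ν) ^ σ i)) l (𝓝 0) := by
    simpa using ((tendsto_mul_rpow_atTop_nhds_zero (div_pos hρ hν)
      ((div_lt_one hν).2 hρν)).comp hσ).const_mul (K / ρ)
  filter_upwards [hratio.eventually (gt_mem_nhds one_pos)] with i hi
  calc K * σ i * ρ ^ (σ i - 1)
      = K / ρ * (σ i * (ρ / ν) ^ σ i) * ν ^ σ i := by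
        rw [Real.rpow_sub_one hρ.ne', Real.div_rpow hρ.le hν.le]
        field_simp [(Real.rpow_pos_of_pos hν (σ i)).ne']
    _ ≤ 1 * ν ^ σ i := by gcongr
    _ = ν ^ σ i := one_mul _

theorem norm_ofReal_add_ofReal_mul_I_le {x y C : ℝ} (hx : 0 < x) (hy : |y / x| ≤ C) :
    ‖(x : ℂ) + (y : ℂ) * Complex.I‖ ≤ (1 + C) * x := by
  have hyx : |y| ≤ C * x := by rwa [abs_div, abs_of_pos hx, div_le_iff₀ hx] at hy
  calc ‖(x : ℂ) + (y : ℂ) * Complex.I‖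
      ≤ |x| + |y| := by simpa using Complex.norm_le_abs_re_add_abs_im ((x : ℂ) + y * Complex.I)
    _ ≤ (1 + C) * x := by rw [abs_of_pos hx]; linarith

theorem stmt_18_general (a : ℕ → ℂ) (σ τ : ℕ → ℝ)
    (hσ : Tendsto σ atTop atTop)
    (hbound : ∃ (C : ℝ) (i₀ : ℕ), ∀ i ≥ i₀, |τ i / σ i| ≤ C)
    (ν : ℝ)
    (hconv : Summable fun i => ‖a i‖ * ν ^ (σ i) * Real.exp (2 * π * |τ i|)) :
    ∀ ε : ℝ, 0 < ε → ε < ν →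
      Summable fun i =>
        ‖((σ i : ℂ) + (τ i : ℂ) * Complex.I) * a i‖ *
          (ν - ε) ^ (σ i - 1) * Real.exp (2 * π * |τ i|) := by
  intro ε hε hεν
  obtain ⟨C, i₀, hC⟩ := hbound
  have hνε : 0 < ν - ε := by linarith
  refine Summable.of_norm_bounded_eventually_nat hconv ?_
  filter_upwards [eventually_mul_mul_rpow_sub_one_le_rpow hσ (1 + C) hνε (by linarith),
    hσ.eventually_gt_atTop 0, eventually_atTop.2 ⟨i₀, hC⟩] with i hratio hσpos hτσ
  have hn := norm_ofReal_add_ofReal_mul_I_le hσpos hτσ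
  rw [Real.norm_of_nonneg (by positivity), norm_mul, mul_comm ‖_‖ ‖a i‖, mul_assoc ‖a i‖]
  gcongr
  exact (mul_le_mul_of_nonneg_right hn (by positivity)).trans hratio

/-- If `Σ aᵢ x^{nᵢ}` (with `nᵢ = σᵢ + iτᵢ`, `σᵢ → +∞`, `|τᵢ/σᵢ|` eventually bounded)
converges absolutely in the sharp sense at radius `ν`, i.e.
`Σ |aᵢ| ν^{σᵢ} e^{2π|τᵢ|} < ∞`, then the termwise derivative series
`Σ nᵢ aᵢ x^{nᵢ - 1}` converges absolutely in the sharp sense at radius `ν - ε` for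
every `0 < ε < ν`. -/
theorem stmt_18 (a : ℕ → ℂ) (σ τ : ℕ → ℝ)
    (hσ : Tendsto σ atTop atTop)
    (hbound : ∃ (C : ℝ) (i₀ : ℕ), ∀ i ≥ i₀, |τ i / σ i| ≤ C)
    (ν : ℝ) (hν : 0 < ν)
    (hconv : Summable fun i => ‖a i‖ * ν ^ (σ i) * Real.exp (2 * π * |τ i|)) :
    ∀ ε : ℝ, 0 < ε → ε < ν →
      Summable fun i =>
        ‖((σ i : ℂ) + (τ i : ℂ) * Complex.I) * a i‖ *
          (ν - ε) ^ (σ i - 1) * Real.exp (2 * π * |τ i|) :=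
  stmt_18_general a σ τ hσ hbound ν hconv
end

section
/- Uniqueness theorem for generalized power series: suppose Σ_{i} a_i x^{n_i} with distinct complex exponents n_i = σ_i + iτ_i (σ_i nondecreasing, σ_i → ∞, |τ_i/σ_i| bounded eventually) converges absolutely in the sharp sense on a circle around the origin, and the represented function vanishes identically on a punctured neighborhood of 0 (with x^n = e^{n log x}, 0 ≤ Im log x < 2π). Then all coefficients a_i vanish. -/
open Filter Real

/-- The branch of the logarithm with imaginary part in `[0, 2π)`. -/
noncomputable def olog (x : ℂ) : ℂ :=
  if 0 ≤ (Complex.log x).im then Complex.log x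
  else Complex.log x + 2 * π * Complex.I

/-- The power `x^n = e^{n log x}` with `Im (log x) ∈ [0, 2π)`. -/
noncomputable def opow (x n : ℂ) : ℂ := Complex.exp (n * olog x)

/-!
Put `x = e^{-t}`: with `sᵢ = σᵢ + iτᵢ` the hypothesis says that the generalized Dirichlet series
`Σ aᵢ e^{-sᵢ t}` vanishes for all large real `t`. If some `aᵢ ≠ 0`, let `σ₀` be the least `σᵢ`
with `aᵢ ≠ 0`; since `σᵢ → ∞` only finitely many indices attain it. After multiplying by
`e^{σ₀ t}`, the terms with `σᵢ > σ₀` tend to `0` as `t → ∞` by dominated convergence, so the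
trigonometric polynomial `Σ_{σᵢ = σ₀} aᵢ e^{-iτᵢ t}` tends to `0`. Its frequencies are distinct,
and each coefficient is the limit of the Cesàro means `T⁻¹ ∫₀ᵀ e^{iτⱼ t} (⋯) dt`, hence is `0`.
-/

open Topology

section Average

variable {E : Type*} [NormedAddCommGroup E] [NormedSpace ℝ E] {φ : ℝ → E}

theorem tendsto_intervalIntegral_nat_add_one (hφ : Tendsto φ atTop (𝓝 0)) :
    Tendsto (fun k : ℕ => ∫ t in (k : ℝ)..k + 1, φ t) atTop (𝓝 0) := by
  refine NormedAddGroup.tendsto_nhds_zero.2 fun ε hε => ?_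
  obtain ⟨t₀, ht₀⟩ := eventually_atTop.1
    (NormedAddGroup.tendsto_nhds_zero.1 hφ (ε / 2) (half_pos hε))
  filter_upwards [tendsto_natCast_atTop_atTop.eventually_ge_atTop t₀] with k hk
  calc ‖∫ t in (k : ℝ)..k + 1, φ t‖ ≤ ε / 2 * |(k + 1 : ℝ) - k| := by
        refine intervalIntegral.norm_integral_le_of_norm_le_const fun t ht => (ht₀ t ?_).le
        rw [Set.uIoc_of_le (by linarith)] at ht
        linarith [ht.1]
    _ < ε := by rw [add_sub_cancel_left, abs_one, mul_one]; linarith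

theorem tendsto_average_intervalIntegral_nat (hc : Continuous φ) (hφ : Tendsto φ atTop (𝓝 0)) :
    Tendsto (fun N : ℕ => (N : ℝ)⁻¹ • ∫ t in (0 : ℝ)..N, φ t) atTop (𝓝 0) := by
  refine (tendsto_intervalIntegral_nat_add_one hφ).cesaro_smul.congr fun N => ?_
  have hsplit := intervalIntegral.sum_integral_adjacent_intervals (a := fun k : ℕ => (k : ℝ))
    (n := N) (μ := MeasureTheory.volume) (fun k _ => hc.intervalIntegrable _ _)
  push_cast at hsplit
  rw [hsplit]

end Average

section TrigonometricPolynomial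

open Complex

theorem tendsto_average_intervalIntegral_exp_mul_I (μ : ℝ) :
    Tendsto (fun N : ℕ => (N : ℝ)⁻¹ • ∫ t in (0 : ℝ)..N, exp (μ * t * I)) atTop
      (𝓝 (if μ = 0 then 1 else 0)) := by
  split_ifs with hμ
  · refine tendsto_const_nhds.congr' ?_
    filter_upwards [eventually_ne_atTop 0] with N hN
    simp [hμ, hN]
  · have hc : (μ * I : ℂ) ≠ 0 := mul_ne_zero (ofReal_ne_zero.2 hμ) I_ne_zero
    have hbound (N : ℕ) : ‖∫ t in (0 : ℝ)..N, exp (μ * t * I)‖ ≤ 2 / |μ| := by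
      simp_rw [mul_right_comm _ _ I]
      rw [integral_exp_mul_complex hc, norm_div, norm_mul, norm_I, mul_one, norm_real,
        Real.norm_eq_abs]
      gcongr
      refine (norm_sub_le _ _).trans ?_
      simp_rw [mul_right_comm _ I, ← ofReal_mul, norm_exp_ofReal_mul_I]
      norm_num
    have hlim := (tendsto_inv_atTop_zero.comp tendsto_natCast_atTop_atTop).mul_const (2 / |μ|)
    rw [zero_mul] at hlim
    refine squeeze_zero_norm (fun N => ?_) hlim
    rw [norm_smul, norm_inv, Real.norm_natCast]
    exact mul_le_mul_of_nonneg_left (hbound N) (by positivity)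

theorem eq_zero_of_tendsto_sum_exp_mul_I {ι : Type*} [Fintype ι] {c : ι → ℂ} {μ : ι → ℝ}
    (hμ : Function.Injective μ)
    (h : Tendsto (fun t : ℝ => ∑ j, c j * exp (μ j * t * I)) atTop (𝓝 0)) : c = 0 := by
  funext j₀
  set φ : ℝ → ℂ := fun t => ∑ j, c j * exp ((μ j - μ j₀ : ℝ) * t * I)
  have hφ_eq (t : ℝ) : φ t = exp ((-μ j₀ * t : ℝ) * I) * ∑ j, c j * exp (μ j * t * I) := by
    simp only [φ, Finset.mul_sum, mul_left_comm _ (c _), ← Complex.exp_add]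
    congr! 3
    push_cast
    ring
  have hφ : Tendsto φ atTop (𝓝 0) := by
    rw [tendsto_zero_iff_norm_tendsto_zero] at h ⊢
    refine h.congr fun t => ?_
    rw [hφ_eq, norm_mul, norm_exp_ofReal_mul_I, one_mul]
  have hmean : Tendsto (fun N : ℕ => (N : ℝ)⁻¹ • ∫ t in (0 : ℝ)..N, φ t) atTop
      (𝓝 (∑ j, c j * if μ j - μ j₀ = 0 then 1 else 0)) := by
    have hint (j : ι) (N : ℕ) : IntervalIntegrable
        (fun t : ℝ => c j * exp ((μ j - μ j₀ : ℝ) * t * I)) MeasureTheory.volume 0 N := by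
      apply Continuous.intervalIntegrable; fun_prop
    simp only [φ, intervalIntegral.integral_finsetSum fun j _ => hint j _,
      intervalIntegral.integral_const_mul, Finset.smul_sum]
    exact tendsto_finsetSum _ fun j _ =>
      ((tendsto_average_intervalIntegral_exp_mul_I _).const_mul (c j)).congr fun N =>
        mul_smul_comm _ _ _
  have hval : ∑ j, c j * (if μ j - μ j₀ = 0 then 1 else 0) = c j₀ := by
    rw [Finset.sum_eq_single j₀ (fun j _ hj => by simp [sub_eq_zero, hμ.ne hj]) (by simp)]
    simp
  rw [← hval]
  exact tendsto_nhds_unique hmean (tendsto_average_intervalIntegral_nat (by fun_prop) hφ)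

end TrigonometricPolynomial

section DirichletSeries

open Complex

variable {ι : Type*} {a s : ι → ℂ} {t₀ : ℝ}

theorem norm_mul_exp_neg_mul_le {a s : ℂ} {t₀ t : ℝ} (ht : t₀ ≤ t) (hs : a ≠ 0 → 0 ≤ s.re) :
    ‖a * exp (-s * t)‖ ≤ ‖a‖ * Real.exp (-s.re * t₀) := by
  rw [norm_mul, norm_exp]
  rcases eq_or_ne a 0 with rfl | ha
  · simp
  · have := hs ha
    gcongr
    simp only [neg_mul, neg_re, mul_re, ofReal_re, ofReal_im, mul_zero, sub_zero]
    nlinarith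

theorem tendsto_tsum_mul_exp_neg_mul_of_re_pos
    (hsum : Summable fun i => ‖a i‖ * Real.exp (-(s i).re * t₀))
    (hpos : ∀ i, a i ≠ 0 → 0 < (s i).re) :
    Tendsto (fun t : ℝ => ∑' i, a i * exp (-s i * t)) atTop (𝓝 0) := by
  have hterm (i : ι) : Tendsto (fun t : ℝ => a i * exp (-s i * t)) atTop (𝓝 0) := by
    rcases eq_or_ne (a i) 0 with hi | hi
    · simp [hi]
    have hexp : Tendsto (fun t : ℝ => Real.exp (-(s i).re * t)) atTop (𝓝 0) :=
      Real.tendsto_exp_atBot.comp (tendsto_id.const_mul_atTop_of_neg (by linarith [hpos i hi]))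
    rw [tendsto_zero_iff_norm_tendsto_zero]
    simpa [norm_exp] using hexp.const_mul ‖a i‖
  have hbound : ∀ᶠ t : ℝ in atTop, ∀ i,
      ‖a i * exp (-s i * t)‖ ≤ ‖a i‖ * Real.exp (-(s i).re * t₀) :=
    (eventually_ge_atTop t₀).mono fun t ht i =>
      norm_mul_exp_neg_mul_le ht fun hi => (hpos i hi).le
  simpa using tendsto_tsum_of_dominated_convergence hsum hterm hbound

theorem tendsto_sum_mul_exp_neg_mul_of_tsum_eventually_eq_zero
    (hsum : Summable fun i => ‖a i‖ * Real.exp (-(s i).re * t₀))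
    (S : Finset ι) (hS : ∀ i ∉ S, a i ≠ 0 → 0 < (s i).re)
    (hzero : ∀ᶠ t : ℝ in atTop, ∑' i, a i * exp (-s i * t) = 0) :
    Tendsto (fun t : ℝ => ∑ i ∈ S, a i * exp (-s i * t)) atTop (𝓝 0) := by
  have hsumc : Summable fun i : ↥(S : Set ι)ᶜ => ‖a i‖ * Real.exp (-(s i).re * t₀) :=
    hsum.subtype _
  have htail := tendsto_tsum_mul_exp_neg_mul_of_re_pos hsumc fun i => hS i i.2
  rw [← neg_zero]
  refine htail.neg.congr' ?_
  filter_upwards [hzero, eventually_ge_atTop t₀] with t h0 ht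
  have hsummable : Summable fun i => a i * exp (-s i * t) :=
    (Finset.summable_compl_iff S).1 <| hsumc.of_norm_bounded fun i =>
      norm_mul_exp_neg_mul_le ht fun hi => (hS i i.2 hi).le
  rw [← hsummable.sum_add_tsum_compl] at h0
  exact (eq_neg_of_add_eq_zero_left h0).symm

theorem eq_zero_of_mem_of_tsum_mul_exp_neg_mul_eventually_eq_zero (hs : Function.Injective s)
    (hsum : Summable fun i => ‖a i‖ * Real.exp (-(s i).re * t₀))
    (S : Finset ι) (hS : ∀ i ∉ S, a i ≠ 0 → 0 < (s i).re) (hre : ∀ i ∈ S, (s i).re = 0)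
    (hzero : ∀ᶠ t : ℝ in atTop, ∑' i, a i * exp (-s i * t) = 0) :
    ∀ i ∈ S, a i = 0 := by
  have htrig : Tendsto (fun t : ℝ => ∑ i : S, a i * exp (((-(s i).im : ℝ) : ℂ) * t * I))
      atTop (𝓝 0) := by
    refine (tendsto_sum_mul_exp_neg_mul_of_tsum_eventually_eq_zero hsum S hS hzero).congr
      fun t => ?_
    rw [← Finset.sum_coe_sort S]
    refine Finset.sum_congr rfl fun i _ => ?_
    congr 2
    apply Complex.ext <;> simp [hre i i.2]
  have hinj : Function.Injective fun i : S => -(s i).im := fun i j h =>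
    Subtype.ext <| hs <| Complex.ext (by rw [hre i i.2, hre j j.2]) (neg_inj.1 h)
  exact fun i hi => congr_fun (eq_zero_of_tendsto_sum_exp_mul_I hinj htrig) ⟨i, hi⟩

theorem eq_zero_of_tsum_mul_exp_neg_mul_eventually_eq_zero (hs : Function.Injective s)
    (hre : Tendsto (fun i => (s i).re) cofinite atTop)
    (hsum : Summable fun i => ‖a i‖ * Real.exp (-(s i).re * t₀))
    (hzero : ∀ᶠ t : ℝ in atTop, ∑' i, a i * exp (-s i * t) = 0) :
    a = 0 := by
  by_contra ha
  obtain ⟨i₁, hi₁⟩ := Function.ne_iff.1 ha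
  have : Nonempty {i // a i ≠ 0} := ⟨⟨i₁, hi₁⟩⟩
  obtain ⟨⟨i₀, hi₀⟩, hmin⟩ :=
    (hre.comp (Subtype.val_injective (p := fun i => a i ≠ 0)).tendsto_cofinite).exists_forall_le
  set σ₀ := (s i₀).re
  have hfin : {i | a i ≠ 0 ∧ (s i).re = σ₀}.Finite :=
    (eventually_cofinite.1 (hre.eventually_gt_atTop σ₀)).subset fun i hi => by simp [hi.2]
  set S := hfin.toFinset
  -- shifting the exponents by `σ₀` makes the leading ones, indexed by `S`, purely imaginary
  set s' : ι → ℂ := fun i => s i - σ₀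
  have hsum' : Summable fun i => ‖a i‖ * Real.exp (-(s' i).re * t₀) := by
    refine (hsum.mul_left (Real.exp (σ₀ * t₀))).congr fun i => ?_
    simp only [s', sub_re, ofReal_re]
    rw [mul_left_comm, ← Real.exp_add]
    ring_nf
  have hS : ∀ i ∉ S, a i ≠ 0 → 0 < (s' i).re := by
    intro i hiS hi
    simp only [S, Set.Finite.mem_toFinset] at hiS
    simp only [s', sub_re, ofReal_re, sub_pos]
    exact (hmin ⟨i, hi⟩).lt_of_ne fun h => hiS ⟨hi, h.symm⟩
  have hre' : ∀ i ∈ S, (s' i).re = 0 := by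
    intro i hi
    simp only [S, Set.Finite.mem_toFinset] at hi
    simp [s', hi.2]
  have hzero' : ∀ᶠ t : ℝ in atTop, ∑' i, a i * exp (-s' i * t) = 0 := by
    filter_upwards [hzero] with t ht
    have hfactor (i : ι) :
        a i * exp (-s' i * t) = a i * exp (-s i * t) * Complex.exp (σ₀ * t) := by
      rw [mul_assoc, ← Complex.exp_add]
      simp only [s']
      ring_nf
    simp only [hfactor, tsum_mul_right, ht, zero_mul]
  have hs' : Function.Injective s' := fun i j h => hs (sub_left_injective h)
  exact hi₀ (eq_zero_of_mem_of_tsum_mul_exp_neg_mul_eventually_eq_zero hs' hsum' S hS hre' hzero'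
    i₀ (by simp [S, hi₀, σ₀]))

end DirichletSeries

theorem opow_ofReal_exp (u : ℝ) (n : ℂ) : opow (Real.exp u) n = Complex.exp (n * u) := by
  have hlog : Complex.log (Real.exp u) = u := by
    rw [← Complex.ofReal_log (Real.exp_pos u).le, Real.log_exp]
  simp only [opow, olog, hlog, Complex.ofReal_im, le_refl, if_true]

theorem stmt_19_general (a : ℕ → ℂ) (σ τ : ℕ → ℝ)
    (hdist : Function.Injective fun i => ((σ i : ℂ) + (τ i : ℂ) * Complex.I))
    (hσ : Tendsto σ atTop atTop)
    (ν : ℝ) (hν : 0 < ν)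
    (hconv : Summable fun i => ‖a i‖ * ν ^ (σ i) * Real.exp (2 * π * |τ i|))
    (δ : ℝ) (hδ : 0 < δ)
    (hzero : ∀ x : ℂ, x ≠ 0 → ‖x‖ < δ →
      ∑' i, a i * opow x ((σ i : ℂ) + (τ i : ℂ) * Complex.I) = 0) :
    ∀ i, a i = 0 := by
  set s : ℕ → ℂ := fun i => (σ i : ℂ) + (τ i : ℂ) * Complex.I
  have hre : Tendsto (fun i => (s i).re) cofinite atTop := by
    simpa [s, Nat.cofinite_eq_atTop] using hσ
  -- at `t₀ = -log ν` the dominating series is `Σ ‖aᵢ‖ ν ^ σᵢ ≤ Σ ‖aᵢ‖ ν ^ σᵢ e^{2π|τᵢ|}`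
  have hsum : Summable fun i => ‖a i‖ * Real.exp (-(s i).re * -Real.log ν) := by
    refine hconv.of_nonneg_of_le (fun i => by positivity) fun i => ?_
    have hre_s : (s i).re = σ i := by simp [s]
    rw [hre_s, neg_mul_neg, mul_comm (σ i), ← Real.rpow_def_of_pos hν]
    exact le_mul_of_one_le_right (by positivity) (Real.one_le_exp (by positivity))
  have hzero' : ∀ᶠ t : ℝ in atTop, ∑' i, a i * Complex.exp (-s i * t) = 0 := by
    filter_upwards [eventually_gt_atTop (-Real.log δ)] with t ht
    have hx : ‖(Real.exp (-t) : ℂ)‖ < δ := by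
      rw [Complex.norm_real, Real.norm_of_nonneg (Real.exp_pos _).le]
      exact (Real.exp_lt_exp.2 (by linarith)).trans_eq (Real.exp_log hδ)
    have h0 := hzero _ (Complex.ofReal_ne_zero.2 (Real.exp_pos _).ne') hx
    simp only [opow_ofReal_exp] at h0
    refine (tsum_congr fun i => ?_).trans h0
    simp only [s]
    push_cast
    ring_nf
  exact congr_fun (eq_zero_of_tsum_mul_exp_neg_mul_eventually_eq_zero hdist hre hsum hzero')

/-- Uniqueness theorem for generalized power series: if `Σ aᵢ x^{nᵢ}` with distinct
complex exponents `nᵢ = σᵢ + iτᵢ` (`σᵢ` nondecreasing with `σᵢ → ∞`, `|τᵢ/σᵢ|`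
eventually bounded) converges absolutely in the sharp sense at some radius `ν > 0` and
the represented function vanishes on a punctured neighbourhood of `0`, then all
coefficients vanish. -/
theorem stmt_19 (a : ℕ → ℂ) (σ τ : ℕ → ℝ)
    (hdist : Function.Injective fun i => ((σ i : ℂ) + (τ i : ℂ) * Complex.I))
    (hmono : Monotone σ) (hσ : Tendsto σ atTop atTop)
    (hbound : ∃ (C : ℝ) (i₀ : ℕ), ∀ i ≥ i₀, |τ i / σ i| ≤ C)
    (ν : ℝ) (hν : 0 < ν)
    (hconv : Summable fun i => ‖a i‖ * ν ^ (σ i) * Real.exp (2 * π * |τ i|))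
    (δ : ℝ) (hδ : 0 < δ)
    (hzero : ∀ x : ℂ, x ≠ 0 → ‖x‖ < δ →
      ∑' i, a i * opow x ((σ i : ℂ) + (τ i : ℂ) * Complex.I) = 0) :
    ∀ i, a i = 0 :=
  stmt_19_general a σ τ hdist hσ ν hν hconv δ hδ hzero
end
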